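/- Let H be a finite-dimensional Hopf algebra and K a left H-comodule algebra. An element Σᵢ αᵢ ⊗ fᵢ ∈ H* ⊗ Hom(U,W) has image L'(Σᵢ αᵢ ⊗ fᵢ) lying in Hom_K(H* ⊗ U, H* ⊗ W) if and only if Σᵢ ⟨αᵢ, t⟩ fᵢ(k·w) = Σᵢ ⟨αᵢ, S⁻¹(k₍₋₁₎)t⟩ k₍₀₎·fᵢ(w) for all t ∈ H, w ∈ U, k ∈ K. -/

import Mathlib

open TensorProduct

/-- Convolution product on `H* = Dual k H`, bundled as a bilinear map. -/
noncomputable def convBil (k H : Type*) [CommSemiring k] [Semiring H] [HopfAlgebra k H] :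
    (H →ₗ[k] k) →ₗ[k] (H →ₗ[k] k) →ₗ[k] (H →ₗ[k] k) :=
  (TensorProduct.mapBilinear (RingHom.id k) H H k k).compr₂
    (((LinearMap.llcomp k H (H ⊗[k] H) k).flip (Coalgebra.comul (R := k))) ∘ₗ
      (LinearMap.llcomp k (H ⊗[k] H) (k ⊗[k] k) k (LinearMap.mul' k k)))

/-- The map `L' : H* ⊗ Hom(U,W) → Hom(H* ⊗ U, H* ⊗ W)`, `L'(α ⊗ f)(β ⊗ u) = αβ ⊗ f(u)`. -/
noncomputable def Lmap (k H : Type*) [CommSemiring k] [Semiring H] [HopfAlgebra k H]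
    (U W : Type*) [AddCommMonoid U] [Module k U] [AddCommMonoid W] [Module k W] :
    (H →ₗ[k] k) ⊗[k] (U →ₗ[k] W) →ₗ[k]
      ((H →ₗ[k] k) ⊗[k] U →ₗ[k] (H →ₗ[k] k) ⊗[k] W) :=
  TensorProduct.homTensorHomMap (RingHom.id k) (H →ₗ[k] k) U (H →ₗ[k] k) W ∘ₗ
    LinearMap.rTensor (U →ₗ[k] W) (convBil k H)

/-- The action `⇁'` of `H` on `H*`, `⟨h ⇁' β, x⟩ = ⟨β, S⁻¹(h)x⟩`, bundled. -/
noncomputable def dActL (k : Type*) {H : Type*} [CommSemiring k] [Semiring H] [Algebra k H]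
    (Sinv : H →ₗ[k] H) : H →ₗ[k] ((H →ₗ[k] k) →ₗ[k] (H →ₗ[k] k)) :=
  (LinearMap.llcomp k H H k).flip ∘ₗ (LinearMap.mul k H) ∘ₗ Sinv

/-- Scalar action of `K` on a `K`-module `V` as a linear map `K →ₗ End_k(V)`. -/
noncomputable def lsmulK (k : Type*) {K V : Type*} [CommSemiring k] [Semiring K]
    [Algebra k K] [AddCommMonoid V] [Module k V] [Module K V]
    [IsScalarTower k K V] [SMulCommClass K k V] : K →ₗ[k] (V →ₗ[k] V) where
  toFun a :=
    { toFun := fun v => a • v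
      map_add' := fun v v' => smul_add a v v'
      map_smul' := fun c v => smul_comm a c v }
  map_add' a b := LinearMap.ext fun v => add_smul a b v
  map_smul' c a := LinearMap.ext fun v => smul_assoc c a v

/-!
Evaluating at `ε ⊗ w` shows that `K`-linearity of `L'(ξ)` forces `L'(ξ)(ε ⊗ k·w) = k·L'(ξ)(ε ⊗ w)`,
which, read through `H* ⊗ W ≅ Hom(H, W)`, is the stated identity. Conversely, `L'(ξ)` commutes
with right multiplications in `H*`, and `H*` is an `H^cop`-module algebra for `⇁'` because
`Δ ∘ S⁻¹ = (S⁻¹ ⊗ S⁻¹) ∘ τ ∘ Δ`; by coassociativity of the coaction the identity on the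
elements `ε ⊗ w` then spreads to all of `H* ⊗ U = (ε ⊗ U) · H*`.
-/

open TensorProduct WithConv Coalgebra

section Convolution

variable {k C A B : Type*} [CommSemiring k] [AddCommMonoid C] [Module k C] [Coalgebra k C]
  [Semiring A] [Algebra k A] [Semiring B] [Algebra k B]

lemma toConv_algHom_comp_mul (f : A →ₐ[k] B) (g₁ g₂ : C →ₗ[k] A) :
    toConv (f.toLinearMap ∘ₗ g₁) * toConv (f.toLinearMap ∘ₗ g₂) =
      toConv (f.toLinearMap ∘ₗ (toConv g₁ * toConv g₂).ofConv) :=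
  (congrArg toConv (LinearMap.algHom_comp_convMul_distrib f (toConv g₁) (toConv g₂))).symm

lemma toConv_algHom_comp_one (f : A →ₐ[k] B) :
    toConv (f.toLinearMap ∘ₗ (1 : WithConv (C →ₗ[k] A)).ofConv) = 1 := by
  ext
  simp [LinearMap.convOne_def]

end Convolution

namespace HopfAlgebra

variable {k H : Type*} [CommSemiring k] [Semiring H] [HopfAlgebra k H]

local notation "inclL" => Algebra.TensorProduct.includeLeft (R := k) (S := k) (A := H) (B := H)
local notation "inclR" => Algebra.TensorProduct.includeRight (R := k) (A := H) (B := H)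

lemma toConv_comul_eq_includeLeft_mul_includeRight :
    toConv (comul : H →ₗ[k] H ⊗[k] H) =
      toConv (inclL).toLinearMap * toConv (inclR).toLinearMap := by
  ext c
  rw [(ℛ k c).convMul_apply]
  simp [← (ℛ k c).eq]

lemma toConv_map_antipode_comm_comul :
    toConv (map (antipode k) (antipode k) ∘ₗ (TensorProduct.comm k H H).toLinearMap ∘ₗ comul) =
      toConv ((inclR).toLinearMap ∘ₗ antipode k) * toConv ((inclL).toLinearMap ∘ₗ antipode k) := by
  ext c
  rw [(ℛ k c).convMul_apply]
  simp [← (ℛ k c).eq]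

/-- Writing `Δ` and `(S ⊗ S) ∘ τ ∘ Δ` as convolution products of the two inclusions
`H → H ⊗ H` reduces this to `S ⋆ id = 1` twice. -/
lemma map_antipode_comm_comul_mul_comul :
    toConv (map (antipode k) (antipode k) ∘ₗ (TensorProduct.comm k H H).toLinearMap ∘ₗ comul) *
      toConv (comul : H →ₗ[k] H ⊗[k] H) = 1 := by
  rw [toConv_map_antipode_comm_comul, toConv_comul_eq_includeLeft_mul_includeRight]
  calc _ = toConv ((inclR).toLinearMap ∘ₗ antipode k) *
        (toConv ((inclL).toLinearMap ∘ₗ antipode k) * toConv ((inclL).toLinearMap ∘ₗ .id) *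
          toConv ((inclR).toLinearMap ∘ₗ .id)) := by
        simp only [mul_assoc, LinearMap.comp_id]
    _ = toConv ((inclR).toLinearMap ∘ₗ antipode k) * toConv ((inclR).toLinearMap ∘ₗ .id) := by
        rw [toConv_algHom_comp_mul, LinearMap.antipode_mul_id, toConv_algHom_comp_one, one_mul]
    _ = 1 := by
        rw [toConv_algHom_comp_mul, LinearMap.antipode_mul_id, toConv_algHom_comp_one]

lemma comul_comp_antipode :
    comul ∘ₗ antipode k = map (antipode k) (antipode k) ∘ₗ
      (TensorProduct.comm k H H).toLinearMap ∘ₗ (comul : H →ₗ[k] H ⊗[k] H) :=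
  congrArg ofConv
    (left_inv_eq_right_inv map_antipode_comm_comul_mul_comul LinearMap.comul_right_inv).symm

variable {Sinv : H →ₗ[k] H}

lemma comul_apply_of_antipode_inverse (hS1 : ∀ x, Sinv (antipode k x) = x)
    (hS2 : ∀ x, antipode k (Sinv x) = x) (x : H) :
    comul (R := k) (Sinv x) = map Sinv Sinv (TensorProduct.comm k H H (comul x)) := by
  have h := LinearMap.congr_fun (comul_comp_antipode (k := k) (H := H)) (Sinv x)
  simp only [LinearMap.comp_apply, hS2, LinearEquiv.coe_coe] at h
  rw [h]
  induction comul (R := k) (Sinv x) with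
  | zero => simp
  | tmul a b => simp [hS1]
  | add a b ha hb => simp only [map_add]; exact congrArg₂ (· + ·) ha hb

lemma counit_apply_of_antipode_inverse (hS2 : ∀ x, antipode k (Sinv x) = x) (x : H) :
    counit (R := k) (Sinv x) = counit x := by
  rw [← counit_antipode (R := k) (Sinv x), hS2]

end HopfAlgebra

section DualAction

variable {k H : Type*} [CommSemiring k] [Semiring H] [HopfAlgebra k H]

lemma convBil_apply (γ β : H →ₗ[k] k) : convBil k H γ β = (toConv γ * toConv β).ofConv := rfl

lemma convBil_counit (α : H →ₗ[k] k) : convBil k H α (counit (R := k)) = α := by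
  have h1 : (1 : WithConv (H →ₗ[k] k)) = toConv counit := by
    ext
    simp
  rw [convBil_apply, ← h1, mul_one, ofConv_toConv]

variable {Sinv : H →ₗ[k] H}

lemma dActL_apply (h x : H) (β : H →ₗ[k] k) : dActL k Sinv h β x = β (Sinv h * x) := rfl

lemma dActL_counit (hS2 : ∀ x, HopfAlgebra.antipode k (Sinv x) = x) (h : H) :
    dActL k Sinv h counit = counit (R := k) h • counit := by
  ext x
  simp [dActL_apply, Bialgebra.counit_mul, HopfAlgebra.counit_apply_of_antipode_inverse hS2]

lemma dActL_convBil (hS1 : ∀ x, Sinv (HopfAlgebra.antipode k x) = x)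
    (hS2 : ∀ x, HopfAlgebra.antipode k (Sinv x) = x) (γ β : H →ₗ[k] k) {h : H} {ι : Type*}
    (r : Repr k h ι) :
    dActL k Sinv h (convBil k H γ β) =
      ∑ i ∈ r.index, convBil k H (dActL k Sinv (r.right i) γ) (dActL k Sinv (r.left i) β) := by
  ext x
  rw [dActL_apply, convBil_apply, LinearMap.convMul_apply, Bialgebra.comul_mul,
    HopfAlgebra.comul_apply_of_antipode_inverse hS1 hS2, ← r.eq, ← (ℛ k x).eq]
  simp [Finset.sum_mul_sum, convBil_apply, (ℛ k x).convMul_apply, dActL_apply, Finset.sum_apply]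

end DualAction

section DualActionOnTensor

variable {k H K : Type*} [CommSemiring k] [Semiring H] [HopfAlgebra k H] [Semiring K] [Algebra k K]
variable (Sinv : H →ₗ[k] H) (V : Type*) [AddCommMonoid V] [Module k V] [Module K V]
  [IsScalarTower k K V] [SMulCommClass K k V]

noncomputable def dualAct : H ⊗[k] K →ₗ[k] Module.End k ((H →ₗ[k] k) ⊗[k] V) :=
  lift (((mapBilinear (RingHom.id k) (H →ₗ[k] k) V (H →ₗ[k] k) V) ∘ₗ dActL k Sinv).compl₂
    (lsmulK k))

noncomputable def convRight (β : H →ₗ[k] k) : Module.End k ((H →ₗ[k] k) ⊗[k] V) :=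
  LinearMap.rTensor V ((convBil k H).flip β)

noncomputable def dualActConvRight (β : H →ₗ[k] k) (x : (H →ₗ[k] k) ⊗[k] V) :
    H ⊗[k] (H ⊗[k] K) →ₗ[k] (H →ₗ[k] k) ⊗[k] V :=
  lift (LinearMap.lcomp k _ ((dualAct Sinv V).flip x) ∘ₗ LinearMap.rTensorHom V ∘ₗ
    (convBil k H).flip ∘ₗ (dActL k Sinv).flip β)

variable {Sinv V}

@[simp]
lemma dualAct_tmul_tmul (h : H) (c : K) (β : H →ₗ[k] k) (v : V) :
    dualAct Sinv V (h ⊗ₜ c) (β ⊗ₜ v) = dActL k Sinv h β ⊗ₜ (c • v) := rfl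

@[simp]
lemma convRight_tmul (β γ : H →ₗ[k] k) (v : V) :
    convRight V β (γ ⊗ₜ v) = convBil k H γ β ⊗ₜ v := rfl

@[simp]
lemma dualActConvRight_tmul (β : H →ₗ[k] k) (x : (H →ₗ[k] k) ⊗[k] V) (h : H) (y : H ⊗[k] K) :
    dualActConvRight Sinv V β x (h ⊗ₜ y) = convRight V (dActL k Sinv h β) (dualAct Sinv V y x) :=
  rfl

lemma dualAct_counit_tmul (hS2 : ∀ x, HopfAlgebra.antipode k (Sinv x) = x) (z : H ⊗[k] K)
    (v : V) :
    dualAct Sinv V z (counit ⊗ₜ v) =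
      counit ⊗ₜ (TensorProduct.lid k K (LinearMap.rTensor K counit z) • v) := by
  induction z with
  | zero => simp
  | tmul h c => simp [dActL_counit hS2, TensorProduct.smul_tmul]
  | add z z' hz hz' => simp [hz, hz', add_smul, tmul_add]

lemma dualAct_convRight (hS1 : ∀ x, Sinv (HopfAlgebra.antipode k x) = x)
    (hS2 : ∀ x, HopfAlgebra.antipode k (Sinv x) = x) (β : H →ₗ[k] k) (z : H ⊗[k] K)
    (x : (H →ₗ[k] k) ⊗[k] V) :
    dualAct Sinv V z (convRight V β x) =
      dualActConvRight Sinv V β x (TensorProduct.assoc k H H K (LinearMap.rTensor K comul z)) := by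
  induction z with
  | zero => simp
  | add z z' hz hz' => simp [hz, hz']
  | tmul h c =>
    rw [LinearMap.rTensor_tmul, ← (ℛ k h).eq]
    simp only [sum_tmul, map_sum, TensorProduct.assoc_tmul, dualActConvRight_tmul]
    induction x with
    | zero => simp
    | add x x' hx hx' => simp [hx, hx', Finset.sum_add_distrib]
    | tmul γ v => simp [dActL_convBil hS1 hS2 γ β (ℛ k h), sum_tmul]

lemma Lmap_tmul_eq_convRight {U W : Type*} [AddCommMonoid U] [Module k U] [AddCommMonoid W]
    [Module k W]
    (ξ : (H →ₗ[k] k) ⊗[k] (U →ₗ[k] W)) (γ : H →ₗ[k] k) (u : U) :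
    Lmap k H U W ξ (γ ⊗ₜ u) = convRight W γ (Lmap k H U W ξ (counit ⊗ₜ u)) := by
  induction ξ with
  | zero => simp
  | add ξ ξ' hξ hξ' => simp [hξ, hξ']
  | tmul α f => simp [Lmap, convBil_counit]

variable (lam : K →ₐ[k] H ⊗[k] K)

lemma dualAct_coaction_convRight (hS1 : ∀ x, Sinv (HopfAlgebra.antipode k x) = x)
    (hS2 : ∀ x, HopfAlgebra.antipode k (Sinv x) = x)
    (hcoassoc : ∀ x : K, LinearMap.rTensor K (comul (R := k)) (lam x) =
      (TensorProduct.assoc k H H K).symm (LinearMap.lTensor H lam.toLinearMap (lam x)))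
    (a : K) (β : H →ₗ[k] k) (x : (H →ₗ[k] k) ⊗[k] V) :
    dualAct Sinv V (lam a) (convRight V β x) =
      dualActConvRight Sinv V β x (LinearMap.lTensor H lam.toLinearMap (lam a)) := by
  rw [dualAct_convRight hS1 hS2, hcoassoc, LinearEquiv.apply_symm_apply]

end DualActionOnTensor

section ComoduleAlgebra

variable {k H K : Type*} [CommSemiring k] [Semiring H] [HopfAlgebra k H] [Semiring K] [Algebra k K]
  {Sinv : H →ₗ[k] H} {lam : K →ₐ[k] H ⊗[k] K}
  {U W : Type*} [AddCommMonoid U] [Module k U] [Module K U] [IsScalarTower k K U]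
  [SMulCommClass K k U] [AddCommMonoid W] [Module k W] [Module K W] [IsScalarTower k K W]
  [SMulCommClass K k W]

theorem Lmap_comp_dualAct_iff (hS1 : ∀ x, Sinv (HopfAlgebra.antipode k x) = x)
    (hS2 : ∀ x, HopfAlgebra.antipode k (Sinv x) = x)
    (hcounit : ∀ x : K, TensorProduct.lid k K (LinearMap.rTensor K (counit (R := k)) (lam x)) = x)
    (hcoassoc : ∀ x : K, LinearMap.rTensor K (comul (R := k)) (lam x) =
      (TensorProduct.assoc k H H K).symm (LinearMap.lTensor H lam.toLinearMap (lam x)))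
    (ξ : (H →ₗ[k] k) ⊗[k] (U →ₗ[k] W)) :
    (∀ a, Lmap k H U W ξ ∘ₗ dualAct Sinv U (lam a) = dualAct Sinv W (lam a) ∘ₗ Lmap k H U W ξ) ↔
      ∀ a u, Lmap k H U W ξ (counit ⊗ₜ (a • u)) =
        dualAct Sinv W (lam a) (Lmap k H U W ξ (counit ⊗ₜ u)) := by
  constructor
  · intro hcomm a u
    have h := LinearMap.congr_fun (hcomm a) (counit ⊗ₜ u)
    rwa [LinearMap.comp_apply, LinearMap.comp_apply, dualAct_counit_tmul hS2, hcounit] at h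
  · intro hunit a
    refine TensorProduct.ext' fun β u => ?_
    have hL : ∀ z, Lmap k H U W ξ (dualAct Sinv U z (β ⊗ₜ u)) =
        dualActConvRight Sinv W β (Lmap k H U W ξ (counit ⊗ₜ u))
          (LinearMap.lTensor H lam.toLinearMap z) := by
      intro z
      induction z with
      | zero => simp
      | add z z' hz hz' => simp [hz, hz']
      | tmul h c =>
        rw [dualAct_tmul_tmul, Lmap_tmul_eq_convRight, hunit, LinearMap.lTensor_tmul,
          dualActConvRight_tmul]
        rfl
    rw [LinearMap.comp_apply, LinearMap.comp_apply, hL,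
      ← dualAct_coaction_convRight lam hS1 hS2 hcoassoc, ← Lmap_tmul_eq_convRight]

end ComoduleAlgebra

section Evaluation

variable {k H K : Type*} [CommSemiring k] [Semiring H] [HopfAlgebra k H] [Semiring K] [Algebra k K]
  {Sinv : H →ₗ[k] H}

lemma Lmap_sum_tmul_counit_tmul {U W ι : Type*} [AddCommMonoid U] [Module k U] [AddCommMonoid W]
    [Module k W] [Fintype ι] (α : ι → (H →ₗ[k] k)) (f : ι → (U →ₗ[k] W)) (u : U) :
    Lmap k H U W (∑ i, α i ⊗ₜ f i) (counit ⊗ₜ u) = ∑ i, α i ⊗ₜ f i u := by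
  simp [Lmap, convBil_counit]

lemma dualTensorHom_dualAct_sum_tmul {W ι : Type*} [AddCommMonoid W] [Module k W] [Module K W]
    [IsScalarTower k K W] [SMulCommClass K k W] [Fintype ι] {n : ℕ} (h : Fin n → H)
    (c : Fin n → K) (α : ι → (H →ₗ[k] k)) (w : ι → W) (t : H) :
    dualTensorHom k H W (dualAct Sinv W (∑ j, h j ⊗ₜ c j) (∑ i, α i ⊗ₜ w i)) t =
      ∑ i, ∑ j, α i (Sinv (h j) * t) • (c j • w i) := by
  simp [map_sum, Finset.sum_comm (γ := ι), dActL_apply]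

end Evaluation

theorem stmt18_general {k H K : Type*} [Field k] [Ring H] [HopfAlgebra k H] [FiniteDimensional k H]
    (Sinv : H →ₗ[k] H)
    (hS1 : ∀ x, Sinv ((HopfAlgebra.antipode (R := k) : H →ₗ[k] H) x) = x)
    (hS2 : ∀ x, (HopfAlgebra.antipode (R := k) : H →ₗ[k] H) (Sinv x) = x)
    [Ring K] [Algebra k K]
    (lam : K →ₐ[k] H ⊗[k] K)
    (hcounit : ∀ x : K,
      (TensorProduct.lid k K) ((LinearMap.rTensor K (Coalgebra.counit (R := k))) (lam x)) = x)
    (hcoassoc : ∀ x : K,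
      (LinearMap.rTensor K (Coalgebra.comul (R := k))) (lam x)
        = (TensorProduct.assoc k H H K).symm
            ((LinearMap.lTensor H lam.toLinearMap) (lam x)))
    (U W : Type*) [AddCommGroup U] [Module k U] [Module K U]
    [IsScalarTower k K U] [SMulCommClass K k U]
    [AddCommGroup W] [Module k W] [Module K W]
    [IsScalarTower k K W] [SMulCommClass K k W]
    (ι : Type) [Fintype ι] (α : ι → (H →ₗ[k] k)) (f : ι → (U →ₗ[k] W)) :
    let ρU : K → ((H →ₗ[k] k) ⊗[k] U →ₗ[k] (H →ₗ[k] k) ⊗[k] U) :=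
      fun a => (TensorProduct.lift
        (((TensorProduct.mapBilinear (RingHom.id k) (H →ₗ[k] k) U (H →ₗ[k] k) U)
            ∘ₗ dActL k Sinv).compl₂ (lsmulK k))) (lam a)
    let ρW : K → ((H →ₗ[k] k) ⊗[k] W →ₗ[k] (H →ₗ[k] k) ⊗[k] W) :=
      fun a => (TensorProduct.lift
        (((TensorProduct.mapBilinear (RingHom.id k) (H →ₗ[k] k) W (H →ₗ[k] k) W)
            ∘ₗ dActL k Sinv).compl₂ (lsmulK k))) (lam a)
    ((∀ a : K,
        (Lmap k H U W (∑ i, α i ⊗ₜ[k] f i)) ∘ₗ ρU a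
          = ρW a ∘ₗ (Lmap k H U W (∑ i, α i ⊗ₜ[k] f i)))
      ↔ (∀ (a : K) (n : ℕ) (ha : Fin n → H) (kb : Fin n → K),
          lam a = ∑ j, ha j ⊗ₜ[k] kb j →
          ∀ (t : H) (w : U),
            ∑ i, α i t • (f i) (a • w)
              = ∑ i, ∑ j, α i (Sinv (ha j) * t) • (kb j • (f i) w))) := by
  intro ρU ρW
  refine (Lmap_comp_dualAct_iff hS1 hS2 hcounit hcoassoc _).trans ?_
  simp only [Lmap_sum_tmul_counit_tmul]
  constructor
  · intro h a n ha kb hrep t w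
    have ht := LinearMap.congr_fun (congrArg (dualTensorHom k H W) (h a w)) t
    rw [hrep, dualTensorHom_dualAct_sum_tmul] at ht
    simpa using ht
  · intro h a w
    obtain ⟨n, ha, kb, hrep⟩ := exists_sum_tmul_eq (lam a)
    refine dualTensorHom_bijective.injective (LinearMap.ext fun t => ?_)
    rw [hrep, dualTensorHom_dualAct_sum_tmul]
    simpa using h a n ha kb hrep t w

/-- Characterization of the elements `Σᵢ αᵢ ⊗ fᵢ` of `H* ⊗ Hom(U,W)` whose image under
`L'` is a `K`-module map `H* ⊗ U → H* ⊗ W`. -/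
theorem stmt18 {k H K : Type*} [Field k] [Ring H] [HopfAlgebra k H] [FiniteDimensional k H]
    (Sinv : H →ₗ[k] H)
    (hS1 : ∀ x, Sinv ((HopfAlgebra.antipode (R := k) : H →ₗ[k] H) x) = x)
    (hS2 : ∀ x, (HopfAlgebra.antipode (R := k) : H →ₗ[k] H) (Sinv x) = x)
    [Ring K] [Algebra k K] [FiniteDimensional k K]
    (lam : K →ₐ[k] H ⊗[k] K)
    (hcounit : ∀ x : K,
      (TensorProduct.lid k K) ((LinearMap.rTensor K (Coalgebra.counit (R := k))) (lam x)) = x)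
    (hcoassoc : ∀ x : K,
      (LinearMap.rTensor K (Coalgebra.comul (R := k))) (lam x)
        = (TensorProduct.assoc k H H K).symm
            ((LinearMap.lTensor H lam.toLinearMap) (lam x)))
    (U W : Type*) [AddCommGroup U] [Module k U] [Module K U]
    [IsScalarTower k K U] [SMulCommClass K k U] [FiniteDimensional k U]
    [AddCommGroup W] [Module k W] [Module K W]
    [IsScalarTower k K W] [SMulCommClass K k W] [FiniteDimensional k W]
    (ι : Type) [Fintype ι] (α : ι → (H →ₗ[k] k)) (f : ι → (U →ₗ[k] W)) :
    let ρU : K → ((H →ₗ[k] k) ⊗[k] U →ₗ[k] (H →ₗ[k] k) ⊗[k] U) :=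
      fun a => (TensorProduct.lift
        (((TensorProduct.mapBilinear (RingHom.id k) (H →ₗ[k] k) U (H →ₗ[k] k) U)
            ∘ₗ dActL k Sinv).compl₂ (lsmulK k))) (lam a)
    let ρW : K → ((H →ₗ[k] k) ⊗[k] W →ₗ[k] (H →ₗ[k] k) ⊗[k] W) :=
      fun a => (TensorProduct.lift
        (((TensorProduct.mapBilinear (RingHom.id k) (H →ₗ[k] k) W (H →ₗ[k] k) W)
            ∘ₗ dActL k Sinv).compl₂ (lsmulK k))) (lam a)
    ((∀ a : K,
        (Lmap k H U W (∑ i, α i ⊗ₜ[k] f i)) ∘ₗ ρU a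
          = ρW a ∘ₗ (Lmap k H U W (∑ i, α i ⊗ₜ[k] f i)))
      ↔ (∀ (a : K) (n : ℕ) (ha : Fin n → H) (kb : Fin n → K),
          lam a = ∑ j, ha j ⊗ₜ[k] kb j →
          ∀ (t : H) (w : U),
            ∑ i, α i t • (f i) (a • w)
              = ∑ i, ∑ j, α i (Sinv (ha j) * t) • (kb j • (f i) w))) :=
  stmt18_general Sinv hS1 hS2 lam hcounit hcoassoc U W ι α f
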